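/- arXiv:2312.01471 — 7 statements merged into one kernel-verified Lean document; each statement's English description precedes it below -/
import Mathlib

section
/- Suppose W(y) < 0 for all y ≠ y*, and suppose the weight function τ satisfies τ(y) ≥ τ_L(y) for all y ≠ y*. Then for every step-size value h > 0 and every point y ≠ y*, the NSFD update strictly decreases the quadratic Lyapunov function: V(Φ(y)) < V(y). -/
/-!
With `c = h / (1 + h τ)` the update is `y + c f(y)`, so expanding the quadratic form gives
`V(Φ y) - V(y) = c W + c² ∑ α f²`. Multiplying by `(1 + h τ)² / h`, this has the sign of
`W (1 + h τ) + h ∑ α f² = W + h (τ W + ∑ α f²)`, and `τ ≥ τ_L` says exactly that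
`τ W + ∑ α f² ≤ 0`, so the sign is that of `W < 0`.
-/

open Finset

theorem sum_mul_add_mul_sq {ι R : Type*} [Fintype ι] [CommRing R] (α u v : ι → R) (c : R) :
    ∑ i, α i * (u i + c * v i) ^ 2 =
      ∑ i, α i * u i ^ 2 + c * (2 * ∑ i, α i * u i * v i) + c ^ 2 * ∑ i, α i * v i ^ 2 := by
  simp only [mul_sum, ← sum_add_distrib]
  exact sum_congr rfl fun i _ => by ring

theorem div_mul_add_div_sq_mul_neg {w s t h : ℝ} (hw : w < 0) (hh : 0 < h)
    (hd : 0 < 1 + h * t) (hts : t * w ≤ -s) :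
    h / (1 + h * t) * w + (h / (1 + h * t)) ^ 2 * s < 0 := by
  have hsign : w * (1 + h * t) + h * s < 0 := by nlinarith
  have hfactor : h / (1 + h * t) * w + (h / (1 + h * t)) ^ 2 * s =
      h / (1 + h * t) ^ 2 * (w * (1 + h * t) + h * s) := by
    field_simp
  rw [hfactor]
  exact mul_neg_of_pos_of_neg (by positivity) hsign

theorem nsfd_preserves_quadratic_lyapunov_general
    (n : ℕ)
    (f : (Fin n → ℝ) → (Fin n → ℝ)) (ystar : Fin n → ℝ)
    (α : Fin n → ℝ)
    (τ : (Fin n → ℝ) → ℝ) (hτ0 : ∀ y, 0 ≤ τ y)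
    (hW : ∀ y, y ≠ ystar → 2 * ∑ i, α i * (y i - ystar i) * f y i < 0)
    (hτL : ∀ y, y ≠ ystar →
      τ y ≥ -(∑ i, α i * (f y i) ^ 2) / (2 * ∑ i, α i * (y i - ystar i) * f y i))
    (h : ℝ) (hh : 0 < h)
    (y : Fin n → ℝ) (hy : y ≠ ystar) :
    ∑ i, α i * ((y i + h * f y i / (1 + h * τ y)) - ystar i) ^ 2 <
      ∑ i, α i * (y i - ystar i) ^ 2 := by
  have hd : 0 < 1 + h * τ y := by have := hτ0 y; positivity
  have hupdate : ∀ i, y i + h * f y i / (1 + h * τ y) - ystar i =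
      (y i - ystar i) + h / (1 + h * τ y) * f y i := fun i => by ring
  simp_rw [hupdate, sum_mul_add_mul_sq]
  have hdecrease := div_mul_add_div_sq_mul_neg (hW y hy) hh hd
    ((div_le_iff_of_neg (hW y hy)).mp (hτL y hy))
  linarith

/-- NSFD update strictly decreases the quadratic Lyapunov function
`V(y) = ∑ i, α i * (y i - y* i)^2` for every step size `h > 0` and every
`y ≠ y*`, provided `W(y) < 0` off the equilibrium and the weight `τ`
dominates `τ_L(y) = -(∑ i, α i * (f i y)^2) / W(y)`. -/
theorem nsfd_preserves_quadratic_lyapunov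
    (n : ℕ) (hn : 1 ≤ n)
    (f : (Fin n → ℝ) → (Fin n → ℝ)) (ystar : Fin n → ℝ)
    (α : Fin n → ℝ) (hα : ∀ i, 0 < α i)
    (τ : (Fin n → ℝ) → ℝ) (hτ0 : ∀ y, 0 ≤ τ y)
    (hW : ∀ y, y ≠ ystar → 2 * ∑ i, α i * (y i - ystar i) * f y i < 0)
    (hτL : ∀ y, y ≠ ystar →
      τ y ≥ -(∑ i, α i * (f y i) ^ 2) / (2 * ∑ i, α i * (y i - ystar i) * f y i))
    (h : ℝ) (hh : 0 < h)
    (y : Fin n → ℝ) (hy : y ≠ ystar) :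
    ∑ i, α i * ((y i + h * f y i / (1 + h * τ y)) - ystar i) ^ 2 <
      ∑ i, α i * (y i - ystar i) ^ 2 :=
  nsfd_preserves_quadratic_lyapunov_general n f ystar α τ hτ0 hW hτL h hh y hy
end

section
/- Suppose f(y*) = 0, W(y) < 0 for all y ≠ y*, and τ(y) ≥ τ_L(y) for all y ≠ y*. Let h > 0 and let (y^k) be the sequence defined by an arbitrary initial point y^0 and y^{k+1} = Φ(y^k). Then the sequence V(y^k) is nonincreasing in k, and V(y^{k+1}) < V(y^k) whenever y^k ≠ y*. -/
/-! Writing `c = h / (1 + h τ(y))`, one step moves `y` to `y + c f(y)`, and expanding the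
square gives `V(Φ y) = V y + c W(y) + c² ∑ α f²`. Since `W(y) < 0`, the condition `τ ≥ τ_L` is
`τ W + ∑ α f² ≤ 0`, so `c W + c² ∑ α f² = (h / (1 + h τ)²) (W + h (τ W + ∑ α f²))` is negative.
At `y*` the step does not move, since `f(y*) = 0`. -/

open Finset

section WeightedSquares

variable {ι : Type*} [Fintype ι] (α z : ι → ℝ)

theorem sum_mul_add_mul_sub_sq (y v : ι → ℝ) (c : ℝ) :
    ∑ i, α i * (y i + c * v i - z i) ^ 2 =
      ∑ i, α i * (y i - z i) ^ 2 + c * (2 * ∑ i, α i * (y i - z i) * v i)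
        + c ^ 2 * ∑ i, α i * v i ^ 2 := by
  simp only [mul_sum, ← sum_add_distrib]
  exact sum_congr rfl fun i _ => by ring

theorem nsfd_increment_neg {W S τ h : ℝ} (hW : W < 0) (hτL : -S / W ≤ τ) (hτ : 0 ≤ τ)
    (hh : 0 < h) : h / (1 + h * τ) * W + (h / (1 + h * τ)) ^ 2 * S < 0 := by
  have hD : 0 < 1 + h * τ := by positivity
  have hτW : τ * W + S ≤ 0 := by
    rw [div_le_iff_of_neg hW] at hτL
    linarith
  have hfactor : h / (1 + h * τ) * W + (h / (1 + h * τ)) ^ 2 * S =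
      h / (1 + h * τ) ^ 2 * (W + h * (τ * W + S)) := by
    field_simp
    ring
  rw [hfactor]
  exact mul_neg_of_pos_of_neg (by positivity) (by nlinarith)

theorem sum_sq_nsfd_step_lt {y : ι → ℝ} (v : ι → ℝ) {τ h : ℝ}
    (hW : 2 * ∑ i, α i * (y i - z i) * v i < 0)
    (hτL : -(∑ i, α i * v i ^ 2) / (2 * ∑ i, α i * (y i - z i) * v i) ≤ τ)
    (hτ : 0 ≤ τ) (hh : 0 < h) :
    ∑ i, α i * (y i + h * v i / (1 + h * τ) - z i) ^ 2 < ∑ i, α i * (y i - z i) ^ 2 := by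
  simp only [mul_div_right_comm h]
  rw [sum_mul_add_mul_sub_sq]
  linarith [nsfd_increment_neg hW hτL hτ hh]

end WeightedSquares

theorem nsfd_lyapunov_sequence_monotone_general
    (n : ℕ)
    (f : (Fin n → ℝ) → (Fin n → ℝ)) (ystar : Fin n → ℝ)
    (α : Fin n → ℝ)
    (τ : (Fin n → ℝ) → ℝ) (hτ0 : ∀ y, 0 ≤ τ y)
    (hfstar : f ystar = 0)
    (hW : ∀ y, y ≠ ystar → 2 * ∑ i, α i * (y i - ystar i) * f y i < 0)
    (hτL : ∀ y, y ≠ ystar →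
      τ y ≥ -(∑ i, α i * (f y i) ^ 2) / (2 * ∑ i, α i * (y i - ystar i) * f y i))
    (h : ℝ) (hh : 0 < h)
    (Y : ℕ → (Fin n → ℝ))
    (hY : ∀ k, ∀ i, Y (k + 1) i = Y k i + h * f (Y k) i / (1 + h * τ (Y k))) :
    (∀ k, ∑ i, α i * (Y (k + 1) i - ystar i) ^ 2 ≤
        ∑ i, α i * (Y k i - ystar i) ^ 2) ∧
    (∀ k, Y k ≠ ystar → ∑ i, α i * (Y (k + 1) i - ystar i) ^ 2 <
        ∑ i, α i * (Y k i - ystar i) ^ 2) := by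
  have step_lt : ∀ k, Y k ≠ ystar → ∑ i, α i * (Y (k + 1) i - ystar i) ^ 2 <
      ∑ i, α i * (Y k i - ystar i) ^ 2 := fun k hk => by
    simp only [hY]
    exact sum_sq_nsfd_step_lt α ystar (f (Y k)) (hW _ hk) (hτL _ hk) (hτ0 _) hh
  refine ⟨fun k => ?_, step_lt⟩
  rcases eq_or_ne (Y k) ystar with hk | hk
  · simp [hY, hk, hfstar]
  · exact (step_lt k hk).le

/-- Along the NSFD iteration `y^{k+1} = Φ(y^k)`, the quadratic Lyapunov
function `V(y) = ∑ i, α i * (y i - y* i)^2` is nonincreasing, and strictly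
decreasing whenever `y^k ≠ y*`. -/
theorem nsfd_lyapunov_sequence_monotone
    (n : ℕ) (hn : 1 ≤ n)
    (f : (Fin n → ℝ) → (Fin n → ℝ)) (ystar : Fin n → ℝ)
    (α : Fin n → ℝ) (hα : ∀ i, 0 < α i)
    (τ : (Fin n → ℝ) → ℝ) (hτ0 : ∀ y, 0 ≤ τ y)
    (hfstar : f ystar = 0)
    (hW : ∀ y, y ≠ ystar → 2 * ∑ i, α i * (y i - ystar i) * f y i < 0)
    (hτL : ∀ y, y ≠ ystar →
      τ y ≥ -(∑ i, α i * (f y i) ^ 2) / (2 * ∑ i, α i * (y i - ystar i) * f y i))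
    (h : ℝ) (hh : 0 < h)
    (Y : ℕ → (Fin n → ℝ))
    (hY : ∀ k, ∀ i, Y (k + 1) i = Y k i + h * f (Y k) i / (1 + h * τ (Y k))) :
    (∀ k, ∑ i, α i * (Y (k + 1) i - ystar i) ^ 2 ≤
        ∑ i, α i * (Y k i - ystar i) ^ 2) ∧
    (∀ k, Y k ≠ ystar → ∑ i, α i * (Y (k + 1) i - ystar i) ^ 2 <
        ∑ i, α i * (Y k i - ystar i) ^ 2) :=
  nsfd_lyapunov_sequence_monotone_general n f ystar α τ hτ0 hfstar hW hτL h hh Y hY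
end

section
/- For every point y, every h > 0, and every weight function τ with 1 + h * τ(y) > 0, the variation of the quadratic Lyapunov function under one NSFD update satisfies the identity V(Φ(y)) − V(y) = (h / (1 + h * τ(y))) * ( W(y) + (h / (1 + h * τ(y))) * ∑ i, α i * (f i (y))^2 ). -/
open Finset

theorem weighted_sum_sq_shift_sub {ι : Type*} [Fintype ι] (α x c v : ι → ℝ) (t : ℝ) :
    ∑ i, α i * (x i + t * v i - c i) ^ 2 - ∑ i, α i * (x i - c i) ^ 2 =
      t * (2 * ∑ i, α i * (x i - c i) * v i + t * ∑ i, α i * v i ^ 2) := by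
  simp only [mul_add, mul_sum, ← sum_sub_distrib, ← sum_add_distrib]
  exact sum_congr rfl fun i _ => by ring

theorem nsfd_lyapunov_variation_identity_general
    (n : ℕ)
    (f : (Fin n → ℝ) → (Fin n → ℝ)) (ystar : Fin n → ℝ)
    (α : Fin n → ℝ)
    (τ : (Fin n → ℝ) → ℝ)
    (h : ℝ)
    (y : Fin n → ℝ) :
    (∑ i, α i * ((y i + h * f y i / (1 + h * τ y)) - ystar i) ^ 2) -
      ∑ i, α i * (y i - ystar i) ^ 2 =
    (h / (1 + h * τ y)) *
      ((2 * ∑ i, α i * (y i - ystar i) * f y i) +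
        (h / (1 + h * τ y)) * ∑ i, α i * (f y i) ^ 2) := by
  simp_rw [mul_div_right_comm h]
  exact weighted_sum_sq_shift_sub α y ystar (f y) _

/-- Exact identity for the variation of the quadratic Lyapunov function
under one NSFD update. -/
theorem nsfd_lyapunov_variation_identity
    (n : ℕ) (hn : 1 ≤ n)
    (f : (Fin n → ℝ) → (Fin n → ℝ)) (ystar : Fin n → ℝ)
    (α : Fin n → ℝ) (hα : ∀ i, 0 < α i)
    (τ : (Fin n → ℝ) → ℝ)
    (h : ℝ) (hh : 0 < h)
    (y : Fin n → ℝ) (hden : 0 < 1 + h * τ y) :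
    (∑ i, α i * ((y i + h * f y i / (1 + h * τ y)) - ystar i) ^ 2) -
      ∑ i, α i * (y i - ystar i) ^ 2 =
    (h / (1 + h * τ y)) *
      ((2 * ∑ i, α i * (y i - ystar i) * f y i) +
        (h / (1 + h * τ y)) * ∑ i, α i * (f y i) ^ 2) :=
  nsfd_lyapunov_variation_identity_general n f ystar α τ h y
end

section
/- For every point y, every h > 0, and every weight function τ with 1 + h * τ(y) > 0, one has V(Φ(y)) − V(y) < 0 if and only if W(y) + (h / (1 + h * τ(y))) * ∑ i, α i * (f i (y))^2 < 0. -/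
/-!
Writing the NSFD step as `y ↦ y + c • f y` with `c = h / (1 + h τ(y)) > 0`, the change of the
quadratic Lyapunov function is exactly `c * (W(y) + c * ∑ i, α i * (f i y)^2)`, so its sign is
the sign of the second factor.
-/

open Finset

theorem sum_mul_sq_add_mul_sub_sum_mul_sq {ι R : Type*} [Fintype ι] [CommRing R]
    (a x z v : ι → R) (c : R) :
    (∑ i, a i * (x i + c * v i - z i) ^ 2) - ∑ i, a i * (x i - z i) ^ 2 =
      c * (2 * ∑ i, a i * (x i - z i) * v i + c * ∑ i, a i * v i ^ 2) := by
  simp only [mul_add, mul_sum, ← sum_sub_distrib, ← sum_add_distrib]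
  exact sum_congr rfl fun i _ ↦ by ring

theorem nsfd_lyapunov_decrease_iff_general
    (n : ℕ)
    (f : (Fin n → ℝ) → (Fin n → ℝ)) (ystar : Fin n → ℝ)
    (α : Fin n → ℝ)
    (τ : (Fin n → ℝ) → ℝ)
    (h : ℝ) (hh : 0 < h)
    (y : Fin n → ℝ) (hden : 0 < 1 + h * τ y) :
    ((∑ i, α i * ((y i + h * f y i / (1 + h * τ y)) - ystar i) ^ 2) -
        (∑ i, α i * (y i - ystar i) ^ 2) < 0) ↔
      (2 * ∑ i, α i * (y i - ystar i) * f y i) +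
        (h / (1 + h * τ y)) * ∑ i, α i * (f y i) ^ 2 < 0 := by
  set c := h / (1 + h * τ y)
  have hc : 0 < c := div_pos hh hden
  have hstep : ∀ i, h * f y i / (1 + h * τ y) = c * f y i := fun i ↦ by ring
  simp only [hstep, sum_mul_sq_add_mul_sub_sum_mul_sq]
  exact smul_neg_iff_of_pos_left hc

/-- The variation of the quadratic Lyapunov function under one NSFD update
is negative iff `W(y) + (h/(1+hτ(y))) * ∑ i, α i * (f i y)^2 < 0`. -/
theorem nsfd_lyapunov_decrease_iff
    (n : ℕ) (hn : 1 ≤ n)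
    (f : (Fin n → ℝ) → (Fin n → ℝ)) (ystar : Fin n → ℝ)
    (α : Fin n → ℝ) (hα : ∀ i, 0 < α i)
    (τ : (Fin n → ℝ) → ℝ)
    (h : ℝ) (hh : 0 < h)
    (y : Fin n → ℝ) (hden : 0 < 1 + h * τ y) :
    ((∑ i, α i * ((y i + h * f y i / (1 + h * τ y)) - ystar i) ^ 2) -
        (∑ i, α i * (y i - ystar i) ^ 2) < 0) ↔
      (2 * ∑ i, α i * (y i - ystar i) * f y i) +
        (h / (1 + h * τ y)) * ∑ i, α i * (f y i) ^ 2 < 0 :=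
  nsfd_lyapunov_decrease_iff_general n f ystar α τ h hh y hden
end

section
/- Suppose f satisfies the positivity condition and the weight function τ satisfies τ(y) ≥ 0 and τ(y) ≥ τ_i*(y) for every index i and every y in the nonnegative orthant. Then for every h > 0 and every point y with y i ≥ 0 for all i, the NSFD update satisfies Φ(y) i ≥ 0 for all i. -/
/-! Writing `Φ(y) i = (y i + h * (f y i + τ y * y i)) / (1 + h * τ y)`, it suffices that
`f y i + τ y * y i ≥ 0`. This is clear when `f y i ≥ 0`; otherwise the positivity condition
forces `y i > 0`, and `τ y ≥ -f y i / y i` is exactly the required inequality. -/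

lemma add_mul_div_one_add_mul_nonneg {a b t h : ℝ} (ha : 0 ≤ a) (ht : 0 ≤ t) (hh : 0 ≤ h)
    (hab : 0 ≤ b + t * a) : 0 ≤ a + h * b / (1 + h * t) := by
  have hden : 0 < 1 + h * t := by positivity
  have hrw : a + h * b / (1 + h * t) = (a + h * (b + t * a)) / (1 + h * t) := by
    field_simp
    ring
  rw [hrw]
  positivity

lemma add_mul_nonneg_of_ite_le {a b t : ℝ} (ha : 0 ≤ a) (hb : a = 0 → 0 ≤ b) (ht : 0 ≤ t)
    (hbt : (if 0 ≤ b then 0 else -b / a) ≤ t) : 0 ≤ b + t * a := by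
  by_cases hb0 : 0 ≤ b
  · positivity
  · have ha0 : 0 < a := ha.lt_of_ne fun h => hb0 (hb h.symm)
    rw [if_neg hb0, div_le_iff₀ ha0] at hbt
    linarith

theorem nsfd_preserves_positivity_one_step_general
    (n : ℕ)
    (f : (Fin n → ℝ) → (Fin n → ℝ))
    (hpos : ∀ i : Fin n, ∀ y : Fin n → ℝ,
      (∀ j, 0 ≤ y j) → y i = 0 → 0 ≤ f y i)
    (τ : (Fin n → ℝ) → ℝ)
    (hτ0 : ∀ y : Fin n → ℝ, (∀ j, 0 ≤ y j) → 0 ≤ τ y)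
    (hτstar : ∀ y : Fin n → ℝ, (∀ j, 0 ≤ y j) → ∀ i : Fin n,
      τ y ≥ (if 0 ≤ f y i then 0 else -(f y i) / y i))
    (h : ℝ) (hh : 0 < h)
    (y : Fin n → ℝ) (hy : ∀ i, 0 ≤ y i) :
    ∀ i, 0 ≤ y i + h * f y i / (1 + h * τ y) :=
  fun i => add_mul_div_one_add_mul_nonneg (hy i) (hτ0 y hy) hh.le
    (add_mul_nonneg_of_ite_le (hy i) (hpos i y hy) (hτ0 y hy) (hτstar y hy i))

/-- If `f` satisfies the positivity condition and the weight `τ` is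
nonnegative and dominates each `τ_i*` on the nonnegative orthant, then the
NSFD update maps the nonnegative orthant into itself for every `h > 0`. -/
theorem nsfd_preserves_positivity_one_step
    (n : ℕ) (hn : 1 ≤ n)
    (f : (Fin n → ℝ) → (Fin n → ℝ))
    (hpos : ∀ i : Fin n, ∀ y : Fin n → ℝ,
      (∀ j, 0 ≤ y j) → y i = 0 → 0 ≤ f y i)
    (τ : (Fin n → ℝ) → ℝ)
    (hτ0 : ∀ y : Fin n → ℝ, (∀ j, 0 ≤ y j) → 0 ≤ τ y)
    (hτstar : ∀ y : Fin n → ℝ, (∀ j, 0 ≤ y j) → ∀ i : Fin n,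
      τ y ≥ (if 0 ≤ f y i then 0 else -(f y i) / y i))
    (h : ℝ) (hh : 0 < h)
    (y : Fin n → ℝ) (hy : ∀ i, 0 ≤ y i) :
    ∀ i, 0 ≤ y i + h * f y i / (1 + h * τ y) :=
  nsfd_preserves_positivity_one_step_general n f hpos τ hτ0 hτstar h hh y hy
end

section
/- Suppose f satisfies the positivity condition, W(y) < 0 for all y ≠ y*, and the weight function τ satisfies τ(y) ≥ 0 for all y, τ(y) ≥ τ_L(y) for all y ≠ y*, and τ(y) ≥ τ_i*(y) for every index i and every y in the nonnegative orthant. Then for every h > 0 and every point y in the nonnegative orthant with y ≠ y*, the NSFD update Φ(y) lies in the nonnegative orthant and V(Φ(y)) < V(y); that is, the NSFD method simultaneously preserves the quadratic Lyapunov function and the positivity of solutions for all step sizes. -/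
/-!
Write `D = 1 + h τ(y) > 0` and `d = h / D`, so that `Φ(y) = y + d f(y)`.
Positivity: a coordinate with `f i (y) < 0` has `y i > 0` by the positivity condition, and
`τ ≥ τ_i*` means `-f i (y) ≤ τ(y) y i`, whence `D y i + h f i (y) ≥ y i ≥ 0`.
Decrease: along the ray, `V(y + d f) = V(y) + d W + d² S` with `S = ∑ α i f i²`, and
`D (W + d S) = W + h (τ W + S) < 0` because `τ ≥ τ_L = -S / W` with `W < 0`.
-/

open Finset

lemma add_mul_div_one_add_mul_nonneg_s10 {x v h t : ℝ} (hx : 0 ≤ x) (hh : 0 ≤ h)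
    (hD : 0 < 1 + h * t) (hv : x = 0 → 0 ≤ v) (ht : (if 0 ≤ v then 0 else -v / x) ≤ t) :
    0 ≤ x + h * v / (1 + h * t) := by
  by_cases hv0 : 0 ≤ v
  · have : 0 ≤ h * v / (1 + h * t) := div_nonneg (mul_nonneg hh hv0) hD.le
    linarith
  · have hxpos : 0 < x := hx.lt_of_ne fun hx0 => hv0 (hv hx0.symm)
    rw [if_neg hv0, div_le_iff₀ hxpos] at ht
    have hnum : 0 ≤ x * (1 + h * t) + h * v := by nlinarith
    calc (0 : ℝ) ≤ (x * (1 + h * t) + h * v) / (1 + h * t) := div_nonneg hnum hD.le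
      _ = x + h * v / (1 + h * t) := by field_simp

lemma sum_mul_add_smul_sub_sq {ι : Type*} [Fintype ι] (α x v c : ι → ℝ) (d : ℝ) :
    ∑ i, α i * ((x i + d * v i) - c i) ^ 2 =
      ∑ i, α i * (x i - c i) ^ 2 + d * (2 * ∑ i, α i * (x i - c i) * v i)
        + d ^ 2 * ∑ i, α i * v i ^ 2 := by
  simp only [mul_sum, ← sum_add_distrib]
  exact sum_congr rfl fun i _ => by ring

lemma div_one_add_mul_mul_add_sq_mul_neg {W S h t : ℝ} (hW : W < 0) (hh : 0 < h)
    (hD : 0 < 1 + h * t) (ht : -S / W ≤ t) :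
    h / (1 + h * t) * W + (h / (1 + h * t)) ^ 2 * S < 0 := by
  rw [div_le_iff_of_neg hW] at ht
  have hsum : W + h / (1 + h * t) * S < 0 := by
    calc W + h / (1 + h * t) * S = (W + h * (t * W + S)) / (1 + h * t) := by
          field_simp; ring
      _ < 0 := div_neg_of_neg_of_pos (by nlinarith) hD
  have hd : 0 < h / (1 + h * t) := div_pos hh hD
  nlinarith

theorem nsfd_preserves_lyapunov_and_positivity_general
    (n : ℕ)
    (f : (Fin n → ℝ) → (Fin n → ℝ)) (ystar : Fin n → ℝ)
    (α : Fin n → ℝ)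
    (hpos : ∀ i : Fin n, ∀ y : Fin n → ℝ,
      (∀ j, 0 ≤ y j) → y i = 0 → 0 ≤ f y i)
    (hW : ∀ y, y ≠ ystar → 2 * ∑ i, α i * (y i - ystar i) * f y i < 0)
    (τ : (Fin n → ℝ) → ℝ)
    (hτ0 : ∀ y, 0 ≤ τ y)
    (hτL : ∀ y, y ≠ ystar →
      τ y ≥ -(∑ i, α i * (f y i) ^ 2) / (2 * ∑ i, α i * (y i - ystar i) * f y i))
    (hτstar : ∀ y : Fin n → ℝ, (∀ j, 0 ≤ y j) → ∀ i : Fin n,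
      τ y ≥ (if 0 ≤ f y i then 0 else -(f y i) / y i))
    (h : ℝ) (hh : 0 < h)
    (y : Fin n → ℝ) (hy : ∀ i, 0 ≤ y i) (hyne : y ≠ ystar) :
    (∀ i, 0 ≤ y i + h * f y i / (1 + h * τ y)) ∧
      ∑ i, α i * ((y i + h * f y i / (1 + h * τ y)) - ystar i) ^ 2 <
        ∑ i, α i * (y i - ystar i) ^ 2 := by
  have hD : 0 < 1 + h * τ y := add_pos_of_pos_of_nonneg one_pos (mul_nonneg hh.le (hτ0 y))
  refine ⟨fun i =>
    add_mul_div_one_add_mul_nonneg_s10 (hy i) hh.le hD (hpos i y hy) (hτstar y hy i), ?_⟩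
  simp only [mul_div_right_comm h, sum_mul_add_smul_sub_sq]
  linarith [div_one_add_mul_mul_add_sq_mul_neg (hW y hyne) hh hD (hτL y hyne)]

/-- Simultaneous preservation: under the positivity condition and the
Lyapunov-decrease condition `W(y) < 0` off the equilibrium, a weight `τ`
that is nonnegative, dominates `τ_L` off the equilibrium and dominates each
`τ_i*` on the nonnegative orthant gives an NSFD method that keeps the
nonnegative orthant invariant and strictly decreases the quadratic Lyapunov
function, for every step size. -/
theorem nsfd_preserves_lyapunov_and_positivity
    (n : ℕ) (hn : 1 ≤ n)
    (f : (Fin n → ℝ) → (Fin n → ℝ)) (ystar : Fin n → ℝ)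
    (α : Fin n → ℝ) (hα : ∀ i, 0 < α i)
    (hpos : ∀ i : Fin n, ∀ y : Fin n → ℝ,
      (∀ j, 0 ≤ y j) → y i = 0 → 0 ≤ f y i)
    (hW : ∀ y, y ≠ ystar → 2 * ∑ i, α i * (y i - ystar i) * f y i < 0)
    (τ : (Fin n → ℝ) → ℝ)
    (hτ0 : ∀ y, 0 ≤ τ y)
    (hτL : ∀ y, y ≠ ystar →
      τ y ≥ -(∑ i, α i * (f y i) ^ 2) / (2 * ∑ i, α i * (y i - ystar i) * f y i))
    (hτstar : ∀ y : Fin n → ℝ, (∀ j, 0 ≤ y j) → ∀ i : Fin n,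
      τ y ≥ (if 0 ≤ f y i then 0 else -(f y i) / y i))
    (h : ℝ) (hh : 0 < h)
    (y : Fin n → ℝ) (hy : ∀ i, 0 ≤ y i) (hyne : y ≠ ystar) :
    (∀ i, 0 ≤ y i + h * f y i / (1 + h * τ y)) ∧
      ∑ i, α i * ((y i + h * f y i / (1 + h * τ y)) - ystar i) ^ 2 <
        ∑ i, α i * (y i - ystar i) ^ 2 :=
  nsfd_preserves_lyapunov_and_positivity_general n f ystar α hpos hW τ hτ0 hτL hτstar h hh y hy hyne
end

section
/- Let A, B, C, D > 0, α₂ > 0, α₁ = (C/B)*α₂, and set f₁(y₁,y₂) = −A*y₁^3 + B*y₂, f₂(y₁,y₂) = −C*y₁ − D*y₂^3, τ_L(y₁,y₂) = (α₁*(f₁(y₁,y₂))^2 + α₂*(f₂(y₁,y₂))^2) / (2*A*α₁*y₁^4 + 2*D*α₂*y₂^4) for (y₁,y₂) ≠ (0,0), and τ(y₁,y₂) = τ_L(y₁,y₂) + 0.001. Then for every h > 0 and every (y₁,y₂) ≠ (0,0), the NSFD update (z₁,z₂) with z_i = y_i + h*f_i(y₁,y₂)/(1 + h*τ(y₁,y₂))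 satisfies α₁*z₁^2 + α₂*z₂^2 < α₁*y₁^2 + α₂*y₂^2. -/
/-!
Along the flow, `V̇ = -W` with `W = 2 A α₁ y₁⁴ + 2 D α₂ y₂⁴ > 0` (the choice `α₁ B = C α₂` cancels the
cross terms). One NSFD step moves `y` by `q f(y)` with `q = h / (1 + h τ)`, so
`V(z) = V(y) - q W + q² S` where `S = α₁ f₁² + α₂ f₂²`. Since `τ > τ_L = S / W`, we get `q S < W`,
and the step decreases `V`.
-/

lemma weighted_sq_add_mul_lt {α₁ α₂ y₁ y₂ F₁ F₂ q w : ℝ}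
    (hcross : α₁ * y₁ * F₁ + α₂ * y₂ * F₂ = -(w / 2)) (hq : 0 < q)
    (hqS : q * (α₁ * F₁ ^ 2 + α₂ * F₂ ^ 2) < w) :
    α₁ * (y₁ + q * F₁) ^ 2 + α₂ * (y₂ + q * F₂) ^ 2 < α₁ * y₁ ^ 2 + α₂ * y₂ ^ 2 := by
  have hexpand : α₁ * (y₁ + q * F₁) ^ 2 + α₂ * (y₂ + q * F₂) ^ 2 =
      α₁ * y₁ ^ 2 + α₂ * y₂ ^ 2 - q * (w - q * (α₁ * F₁ ^ 2 + α₂ * F₂ ^ 2)) := by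
    linear_combination 2 * q * hcross
  rw [hexpand]
  have : 0 < q * (w - q * (α₁ * F₁ ^ 2 + α₂ * F₂ ^ 2)) := mul_pos hq (sub_pos.2 hqS)
  linarith

lemma div_one_add_mul_div_add_mul_lt {h s w ε : ℝ} (hh : 0 < h) (hs : 0 ≤ s) (hw : 0 < w)
    (hε : 0 < ε) : h / (1 + h * (s / w + ε)) * s < w := by
  have hd : 0 < 1 + h * (s / w + ε) := by positivity
  rw [div_mul_eq_mul_div, div_lt_iff₀ hd]
  have hexpand : w * (1 + h * (s / w + ε)) = w + h * s + ε * h * w := by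
    field_simp
    ring
  rw [hexpand]
  linarith [mul_pos (mul_pos hε hh) hw]

section PlanarSystem

variable {A B C D α₁ α₂ : ℝ}

lemma planar_weighted_inner_eq (hBC : α₁ * B = C * α₂) (y₁ y₂ : ℝ) :
    α₁ * y₁ * (-A * y₁ ^ 3 + B * y₂) + α₂ * y₂ * (-C * y₁ - D * y₂ ^ 3) =
      -((2 * A * α₁ * y₁ ^ 4 + 2 * D * α₂ * y₂ ^ 4) / 2) := by
  linear_combination y₁ * y₂ * hBC

lemma planar_dissipation_pos (hA : 0 < A) (hD : 0 < D) (hα₁ : 0 < α₁) (hα₂ : 0 < α₂)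
    {y₁ y₂ : ℝ} (hy : (y₁, y₂) ≠ (0, 0)) :
    0 < 2 * A * α₁ * y₁ ^ 4 + 2 * D * α₂ * y₂ ^ 4 := by
  obtain hy₁ | hy₂ : y₁ ≠ 0 ∨ y₂ ≠ 0 := by
    rw [← not_and_or]; simpa using hy
  · exact add_pos_of_pos_of_nonneg (by positivity) (by positivity)
  · exact add_pos_of_nonneg_of_pos (by positivity) (by positivity)

end PlanarSystem

/-- For the planar test system with weight `τ = τ_L + 0.001`, the NSFD
update strictly decreases the quadratic Lyapunov function
`V = α₁ y₁² + α₂ y₂²` for every step size `h > 0` and `(y₁, y₂) ≠ (0, 0)`. -/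
theorem planar_nsfd_lyapunov_decrease
    (A B C D : ℝ) (hA : 0 < A) (hB : 0 < B) (hC : 0 < C) (hD : 0 < D)
    (α₁ α₂ : ℝ) (hα₂ : 0 < α₂) (hα₁ : α₁ = (C / B) * α₂)
    (h : ℝ) (hh : 0 < h)
    (y₁ y₂ : ℝ) (hy : (y₁, y₂) ≠ (0, 0)) :
    α₁ * (y₁ + h * (-A * y₁ ^ 3 + B * y₂) /
        (1 + h * ((α₁ * (-A * y₁ ^ 3 + B * y₂) ^ 2 +
            α₂ * (-C * y₁ - D * y₂ ^ 3) ^ 2) /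
          (2 * A * α₁ * y₁ ^ 4 + 2 * D * α₂ * y₂ ^ 4) + 0.001))) ^ 2 +
      α₂ * (y₂ + h * (-C * y₁ - D * y₂ ^ 3) /
        (1 + h * ((α₁ * (-A * y₁ ^ 3 + B * y₂) ^ 2 +
            α₂ * (-C * y₁ - D * y₂ ^ 3) ^ 2) /
          (2 * A * α₁ * y₁ ^ 4 + 2 * D * α₂ * y₂ ^ 4) + 0.001))) ^ 2 <
    α₁ * y₁ ^ 2 + α₂ * y₂ ^ 2 := by
  have hα₁pos : 0 < α₁ := by rw [hα₁]; positivity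
  have hBC : α₁ * B = C * α₂ := by rw [hα₁]; field_simp
  have hW := planar_dissipation_pos hA hD hα₁pos hα₂ hy
  simp only [mul_div_right_comm h]
  refine weighted_sq_add_mul_lt (planar_weighted_inner_eq hBC y₁ y₂) ?_ ?_
  · positivity
  · exact div_one_add_mul_div_add_mul_lt hh (by positivity) hW (by norm_num)
end
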